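/- arXiv:2602.10415 — 2 statements merged into one kernel-verified Lean document; each statement's English description precedes it below -/
import Mathlib

section
/- (Basic LASSO inequality.) Let Q_0 : ℝ^d → ℝ be defined by Q_0(b) = (1/n) Σ_{t=1}^n ‖y_t − Z_t^⊤ b‖₂² for data y_t ∈ ℝ^m, matrices Z_t ∈ ℝ^{d×m}, and suppose y_t = Z_t^⊤ β₀ + u_t. Let β̂ minimize Q_0(b) + γ‖b‖₁. If ‖(1/n) Σ_t Z_t u_t‖_∞ ≤ γ/4, then (1/n) Σ_{t=1}^n ‖Z_t^⊤(β₀ − β̂)‖₂² + (γ/2)‖(β₀ − β̂)_{S^c}‖₁ ≤ (3γ/2)‖(β₀ − β̂)_S‖₁, where S is the support of β₀. In particular, β₀ − β̂ lies in the cone {a : ‖a_{S^c}‖₁ ≤ 3‖a_S‖₁}. -/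
/-!
Plugging `b = β₀` into the minimality of `β̂` and expanding the squares gives the basic inequality
`(1/n) ∑ ‖Z_tᵀ δ‖² + 2 ⟪δ, w⟫ ≤ γ (‖β₀‖₁ - ‖β̂‖₁)` for `δ = β₀ - β̂` and `w = (1/n) ∑ Z_t u_t`.
Hölder's inequality with `‖w‖_∞ ≤ γ/4` bounds `2 |⟪δ, w⟫|` by `(γ/2) ‖δ‖₁`, and since `β₀` vanishes
off `S`, `‖β₀‖₁ - ‖β̂‖₁ + ‖δ‖₁ ≤ 2 ‖δ_S‖₁`. Splitting `‖δ‖₁ = ‖δ_S‖₁ + ‖δ_{Sᶜ}‖₁` finishes.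
-/

open Matrix

theorem sum_abs_sub_sum_abs_add_sum_abs_sub_le {ι α : Type*} [Fintype ι] [DecidableEq ι]
    [AddCommGroup α] [LinearOrder α] [IsOrderedAddMonoid α] {g : ι → α} {S : Finset ι}
    (hg : ∀ i ∉ S, g i = 0) (f : ι → α) :
    ∑ i, |g i| - ∑ i, |f i| + ∑ i, |g i - f i| ≤ 2 • ∑ i ∈ S, |g i - f i| := by
  simp only [← Finset.sum_add_sum_compl S]
  have hoff_g : ∑ i ∈ Sᶜ, |g i| = 0 :=
    Finset.sum_eq_zero fun i hi => by rw [hg i (Finset.mem_compl.mp hi), abs_zero]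
  have hoff_sub : ∑ i ∈ Sᶜ, |g i - f i| = ∑ i ∈ Sᶜ, |f i| :=
    Finset.sum_congr rfl fun i hi => by rw [hg i (Finset.mem_compl.mp hi), zero_sub, abs_neg]
  have hon : ∑ i ∈ S, |g i| - ∑ i ∈ S, |f i| ≤ ∑ i ∈ S, |g i - f i| := by
    rw [← Finset.sum_sub_distrib]
    exact Finset.sum_le_sum fun i _ => abs_sub_abs_le_abs_sub _ _
  rw [hoff_g, hoff_sub, two_nsmul]
  calc ∑ i ∈ S, |g i| + 0 - (∑ i ∈ S, |f i| + ∑ i ∈ Sᶜ, |f i|)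
        + (∑ i ∈ S, |g i - f i| + ∑ i ∈ Sᶜ, |f i|)
      = (∑ i ∈ S, |g i| - ∑ i ∈ S, |f i|) + ∑ i ∈ S, |g i - f i| := by abel
    _ ≤ ∑ i ∈ S, |g i - f i| + ∑ i ∈ S, |g i - f i| := add_le_add_left hon _

theorem abs_dotProduct_le_mul_sum_abs {ι : Type*} [Fintype ι] {w : ι → ℝ} {c : ℝ}
    (hw : ∀ i, |w i| ≤ c) (v : ι → ℝ) : |v ⬝ᵥ w| ≤ c * ∑ i, |v i| := by
  calc |v ⬝ᵥ w| ≤ ∑ i, |v i * w i| := Finset.abs_sum_le_sum_abs _ _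
    _ ≤ ∑ i, |v i| * c := Finset.sum_le_sum fun i _ => by
        rw [abs_mul]; exact mul_le_mul_of_nonneg_left (hw i) (abs_nonneg _)
    _ = c * ∑ i, |v i| := by rw [← Finset.sum_mul, mul_comm]

section LeastSquares

variable {τ κ ι : Type*} [Fintype τ] [Fintype κ] [Fintype ι]

theorem sum_sq_vecMul_add (a : ι → ℝ) (Z : Matrix ι κ ℝ) (e : κ → ℝ) :
    ∑ j, ((a ᵥ* Z) j + e j) ^ 2 = ∑ j, (a ᵥ* Z) j ^ 2 + 2 * (a ⬝ᵥ Z *ᵥ e) + ∑ j, e j ^ 2 := by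
  rw [dotProduct_mulVec, dotProduct, Finset.mul_sum, ← Finset.sum_add_distrib,
    ← Finset.sum_add_distrib]
  exact Finset.sum_congr rfl fun j _ => by ring

variable {y u : τ → κ → ℝ} {Z : τ → Matrix ι κ ℝ} {β₀ : ι → ℝ}

theorem sum_sq_sub_vecMul_of_eq_add (hmodel : ∀ t, y t = β₀ ᵥ* Z t + u t) (b : ι → ℝ) :
    ∑ t, ∑ j, (y t j - (b ᵥ* Z t) j) ^ 2
      = ∑ t, ∑ j, ((β₀ - b) ᵥ* Z t) j ^ 2 + 2 * ((β₀ - b) ⬝ᵥ ∑ t, Z t *ᵥ u t)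
        + ∑ t, ∑ j, u t j ^ 2 := by
  have hres : ∀ t j, y t j - (b ᵥ* Z t) j = ((β₀ - b) ᵥ* Z t) j + u t j := fun t j => by
    rw [hmodel t, sub_vecMul, Pi.add_apply, Pi.sub_apply]; ring
  simp only [hres, sum_sq_vecMul_add, Finset.sum_add_distrib, dotProduct_sum, Finset.mul_sum]

theorem lasso_basic_inequality (hmodel : ∀ t, y t = β₀ ᵥ* Z t + u t) {βhat : ι → ℝ} {c γ : ℝ}
    (hmin : c * ∑ t, ∑ j, (y t j - (βhat ᵥ* Z t) j) ^ 2 + γ * ∑ i, |βhat i|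
      ≤ c * ∑ t, ∑ j, (y t j - (β₀ ᵥ* Z t) j) ^ 2 + γ * ∑ i, |β₀ i|) :
    c * ∑ t, ∑ j, ((β₀ - βhat) ᵥ* Z t) j ^ 2 + 2 * ((β₀ - βhat) ⬝ᵥ c • ∑ t, Z t *ᵥ u t)
      ≤ γ * (∑ i, |β₀ i| - ∑ i, |βhat i|) := by
  rw [sum_sq_sub_vecMul_of_eq_add hmodel, sum_sq_sub_vecMul_of_eq_add hmodel, sub_self] at hmin
  simp only [zero_vecMul, zero_dotProduct, Pi.zero_apply, ne_eq, OfNat.ofNat_ne_zero,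
    not_false_eq_true, zero_pow, Finset.sum_const_zero, mul_zero, zero_add] at hmin
  rw [dotProduct_smul, smul_eq_mul]
  linarith

end LeastSquares

theorem stmt10_general {n m d : ℕ}
    (y : Fin n → Fin m → ℝ) (Z : Fin n → Matrix (Fin d) (Fin m) ℝ)
    (u : Fin n → Fin m → ℝ) (β₀ βhat : Fin d → ℝ) (γ : ℝ) (hγ : 0 < γ)
    (S : Finset (Fin d)) (hS : ∀ i, i ∈ S ↔ β₀ i ≠ 0)
    (hmodel : ∀ t, y t = Matrix.vecMul β₀ (Z t) + u t)
    (hmin : ∀ b : Fin d → ℝ,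
      (1 / (n : ℝ)) * ∑ t, ∑ j, (y t j - Matrix.vecMul βhat (Z t) j) ^ 2
          + γ * ∑ i, |βhat i|
        ≤ (1 / (n : ℝ)) * ∑ t, ∑ j, (y t j - Matrix.vecMul b (Z t) j) ^ 2
          + γ * ∑ i, |b i|)
    (hdual : ∀ i, |(1 / (n : ℝ)) * ∑ t, ((Z t) *ᵥ (u t)) i| ≤ γ / 4) :
    ((1 / (n : ℝ)) * ∑ t, ∑ j, (Matrix.vecMul (β₀ - βhat) (Z t) j) ^ 2
        + (γ / 2) * ∑ i ∈ Sᶜ, |β₀ i - βhat i|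
      ≤ (3 * γ / 2) * ∑ i ∈ S, |β₀ i - βhat i|) ∧
    (∑ i ∈ Sᶜ, |β₀ i - βhat i| ≤ 3 * ∑ i ∈ S, |β₀ i - βhat i|) := by
  have hbasic := lasso_basic_inequality hmodel (hmin β₀)
  have hnoise := abs_dotProduct_le_mul_sum_abs
    (w := (1 / (n : ℝ)) • ∑ t, Z t *ᵥ u t) (by simpa [Finset.sum_apply] using hdual) (β₀ - βhat)
  have hsupport := sum_abs_sub_sum_abs_add_sum_abs_sub_le
    (fun i hi => not_not.mp (mt (hS i).2 hi)) βhat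
  have hsplit := Finset.sum_add_sum_compl S fun i => |β₀ i - βhat i|
  have hfit : 0 ≤ (1 / (n : ℝ)) * ∑ t, ∑ j, (Matrix.vecMul (β₀ - βhat) (Z t) j) ^ 2 := by
    positivity
  simp only [Pi.sub_apply, nsmul_eq_mul, Nat.cast_ofNat] at hnoise hsupport
  rw [← hsplit] at hnoise hsupport
  have hsupport_γ := mul_le_mul_of_nonneg_left hsupport hγ.le
  have hnoise_lower := (abs_le.mp hnoise).1
  have key : (1 / (n : ℝ)) * ∑ t, ∑ j, (Matrix.vecMul (β₀ - βhat) (Z t) j) ^ 2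
        + (γ / 2) * ∑ i ∈ Sᶜ, |β₀ i - βhat i| ≤ (3 * γ / 2) * ∑ i ∈ S, |β₀ i - βhat i| := by
    linarith
  refine ⟨key, le_of_mul_le_mul_left (a := γ / 2) ?_ (by positivity)⟩
  linarith

/-- basic LASSO inequality: if `β̂` minimizes
`(1/n)∑_t‖y_t − Z_t^⊤b‖₂² + γ‖b‖₁`, `y_t = Z_t^⊤β₀ + u_t`, and
`‖(1/n)∑_t Z_t u_t‖_∞ ≤ γ/4`, then
`(1/n)∑_t‖Z_t^⊤(β₀−β̂)‖₂² + (γ/2)‖(β₀−β̂)_{S^c}‖₁ ≤ (3γ/2)‖(β₀−β̂)_S‖₁`,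
where `S = supp(β₀)`; in particular `β₀ − β̂` lies in the cone
`{a : ‖a_{S^c}‖₁ ≤ 3‖a_S‖₁}`. -/
theorem stmt10 {n m d : ℕ} (hn : 0 < n)
    (y : Fin n → Fin m → ℝ) (Z : Fin n → Matrix (Fin d) (Fin m) ℝ)
    (u : Fin n → Fin m → ℝ) (β₀ βhat : Fin d → ℝ) (γ : ℝ) (hγ : 0 < γ)
    (S : Finset (Fin d)) (hS : ∀ i, i ∈ S ↔ β₀ i ≠ 0)
    (hmodel : ∀ t, y t = Matrix.vecMul β₀ (Z t) + u t)
    (hmin : ∀ b : Fin d → ℝ,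
      (1 / (n : ℝ)) * ∑ t, ∑ j, (y t j - Matrix.vecMul βhat (Z t) j) ^ 2
          + γ * ∑ i, |βhat i|
        ≤ (1 / (n : ℝ)) * ∑ t, ∑ j, (y t j - Matrix.vecMul b (Z t) j) ^ 2
          + γ * ∑ i, |b i|)
    (hdual : ∀ i, |(1 / (n : ℝ)) * ∑ t, ((Z t) *ᵥ (u t)) i| ≤ γ / 4) :
    ((1 / (n : ℝ)) * ∑ t, ∑ j, (Matrix.vecMul (β₀ - βhat) (Z t) j) ^ 2
        + (γ / 2) * ∑ i ∈ Sᶜ, |β₀ i - βhat i|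
      ≤ (3 * γ / 2) * ∑ i ∈ S, |β₀ i - βhat i|) ∧
    (∑ i ∈ Sᶜ, |β₀ i - βhat i| ≤ 3 * ∑ i ∈ S, |β₀ i - βhat i|) :=
  stmt10_general y Z u β₀ βhat γ hγ S hS hmodel hmin hdual
end

section
/- (Impulse response identification.) Suppose x_t = Σ_{ℓ=0}^∞ B_ℓ ε_{t−ℓ} with B₀ = I_N and (ε_t) i.i.d. mean-zero with identity covariance, and suppose additionally that x_{t+h} = A₁ x_t + ⋯ + A_p x_{t−p+1} + u_{t,h}, where u_{t,h} = g(ε_{t+h},…,ε_{t+1}) depends only on the future innovations ε_{t+1},…,ε_{t+h}. Define the impulse response IR_{h,j} = E[x_{t+h} | ε_{t|j}(1), ε_{t−1},…] − E[x_{t+h} | ε_{t|j}(0), ε_{t−1},…], where ε_{t|j}(a) replaces the j-th coordinate of ε_t by a. Then IR_{h,j} = B_{h,j} (the j-th column of B_h), and moreover A₁ = B_h. -/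
/-!
Flipping the `j`-th coordinate of `ε_t` from `0` to `1` moves only the leading term of the
moving average `∑ ℓ, B_{h+ℓ} ε_{t-ℓ}`, by `B_h e_j`. For `A₁ = B_h`, feed the regression a
single innovation `v` at time `0`: at `t = 0` the left side is `B_h v`, the lagged terms
`x_{-i}` with `i ≥ 1` still vanish, `x_0 = B₀ v = v`, and the future term is `g 0 = 0`.
-/

open Matrix Function

section

variable {R m n : Type*} [Fintype n]

theorem tsum_update_sub_tsum_update {β G : Type*} [AddCommGroup G] [TopologicalSpace G]
    [IsTopologicalAddGroup G] [T2Space G] [DecidableEq β] {f : β → G} (hf : Summable f)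
    (b : β) (x y : G) :
    ∑' k, update f b x k - ∑' k, update f b y k = x - y := by
  rw [(hf.hasSum.update b x).tsum_eq, (hf.hasSum.update b y).tsum_eq]
  abel

theorem update_apply_sub_natCast {α : Type*} (e : ℤ → α) (t : ℤ) (v : α) :
    (fun ℓ : ℕ => update e t v (t - ℓ)) = update (fun ℓ : ℕ => e (t - ℓ)) 0 v := by
  have hinj : Injective fun ℓ : ℕ => t - ℓ := fun a b hab => by simpa using hab
  have h0 := update_comp_eq_of_injective e hinj 0 v
  simp only [Nat.cast_zero, sub_zero] at h0
  exact h0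

theorem mulVec_update_one_sub_update_zero [NonAssocRing R] [DecidableEq n] (M : Matrix m n R)
    (x : n → R) (j : n) :
    M *ᵥ (update x j 1 - update x j 0) = fun i => M i j := by
  rw [← update_sub, sub_self, sub_zero]
  exact mulVec_single_one M j

variable [TopologicalSpace R]

noncomputable def movingAverage [NonUnitalNonAssocSemiring R] (B : ℕ → Matrix m n R) (e : ℤ → n → R)
    (t : ℤ) : m → R :=
  ∑' ℓ : ℕ, B ℓ *ᵥ e (t - ℓ)

theorem movingAverage_update_sub [NonUnitalNonAssocRing R] [IsTopologicalAddGroup R]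
    [T2Space R] (B : ℕ → Matrix m n R) (e : ℤ → n → R) (t : ℤ)
    (hsum : Summable fun ℓ : ℕ => B ℓ *ᵥ e (t - ℓ)) (v w : n → R) :
    movingAverage B (update e t v) t - movingAverage B (update e t w) t = B 0 *ᵥ (v - w) := by
  have hupd (u : n → R) : (fun ℓ : ℕ => B ℓ *ᵥ update e t u (t - ℓ))
      = update (fun ℓ : ℕ => B ℓ *ᵥ e (t - ℓ)) 0 (B 0 *ᵥ u) := by
    funext ℓ
    rw [congrFun (update_apply_sub_natCast e t u) ℓ]
    exact apply_update (fun ℓ x => B ℓ *ᵥ x) _ 0 u ℓ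
  rw [movingAverage, movingAverage, hupd, hupd, tsum_update_sub_tsum_update hsum, mulVec_sub]

theorem hasSum_mulVec_single_zero [NonUnitalNonAssocSemiring R] (B : ℕ → Matrix m n R)
    (v : n → R) (t : ℤ) :
    HasSum (fun ℓ : ℕ => B ℓ *ᵥ (Pi.single 0 v : ℤ → n → R) (t - ℓ))
      (if 0 ≤ t then B t.toNat *ᵥ v else 0) := by
  split_ifs with ht
  · convert hasSum_single t.toNat fun ℓ hℓ => ?_ using 1
    · simp [Int.toNat_of_nonneg ht]
    · rw [Pi.single_eq_of_ne (by omega), mulVec_zero]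
  · convert hasSum_zero with ℓ
    rw [Pi.single_eq_of_ne (by omega), mulVec_zero]

theorem regression_coeff_zero_eq [Ring R] [T2Space R] [DecidableEq n] {p h : ℕ} (hp : 0 < p)
    (B : ℕ → Matrix n n R) (hB0 : B 0 = 1) (A : Fin p → Matrix n n R)
    (g : (Fin h → n → R) → n → R)
    (hreg : ∀ e : ℤ → n → R, (∀ t : ℤ, Summable fun ℓ : ℕ => B ℓ *ᵥ e (t - ℓ)) →
      ∀ t : ℤ, movingAverage B e (t + h)
        = ∑ i : Fin p, A i *ᵥ movingAverage B e (t - (i : ℕ)) + g fun k => e (t + 1 + (k : ℕ))) :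
    A ⟨0, hp⟩ = B h := by
  have hg0 : g (fun _ => 0) = 0 := by
    simpa [movingAverage] using (hreg 0 (fun _ => by simp) 0).symm
  rw [ext_iff_mulVec]
  intro v
  have hx (t : ℤ) : movingAverage B (Pi.single 0 v) t = if 0 ≤ t then B t.toNat *ᵥ v else 0 :=
    (hasSum_mulVec_single_zero B v t).tsum_eq
  have hv := hreg _ (fun t => (hasSum_mulVec_single_zero B v t).summable) 0
  simp only [hx, zero_add, Nat.cast_nonneg, ↓reduceIte, Int.toNat_natCast, zero_sub,
    Int.neg_nonneg, Int.natCast_nonpos_iff, Int.toNat_neg_natCast] at hv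
  have hfuture : (fun k : Fin h => (Pi.single 0 v : ℤ → n → R) (1 + k)) = fun _ => 0 :=
    funext fun k => Pi.single_eq_of_ne (by omega) _
  rw [hfuture, hg0, add_zero, Finset.sum_eq_single_of_mem ⟨0, hp⟩ (Finset.mem_univ _)
    fun i _ hi => by rw [if_neg fun h0 => hi (Fin.ext h0), mulVec_zero]] at hv
  simpa only [↓reduceIte, hB0, one_mulVec] using hv.symm

end

theorem stmt14_general {N p h : ℕ} (hp : 0 < p)
    (B : ℕ → Matrix (Fin N) (Fin N) ℝ) (hB0 : B 0 = 1)
    (A : Fin p → Matrix (Fin N) (Fin N) ℝ)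
    (g : (Fin h → (Fin N → ℝ)) → (Fin N → ℝ))
    (hreg : ∀ e : ℤ → (Fin N → ℝ),
      (∀ t : ℤ, Summable (fun ℓ : ℕ => (B ℓ) *ᵥ e (t - ℓ))) →
      ∀ t : ℤ, (∑' ℓ : ℕ, (B ℓ) *ᵥ e (t + (h : ℤ) - ℓ))
        = ∑ i : Fin p, (A i) *ᵥ (∑' ℓ : ℕ, (B ℓ) *ᵥ e (t - ((i : ℕ) : ℤ) - ℓ))
          + g (fun k => e (t + 1 + ((k : ℕ) : ℤ)))) :
    (∀ (e : ℤ → (Fin N → ℝ)),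
      (∀ t : ℤ, Summable (fun ℓ : ℕ => (B (h + ℓ)) *ᵥ e (t - ℓ))) →
      ∀ (t : ℤ) (j : Fin N),
        (∑' ℓ : ℕ, (B (h + ℓ)) *ᵥ
            (Function.update e t (Function.update (e t) j 1) (t - ℓ)))
          - (∑' ℓ : ℕ, (B (h + ℓ)) *ᵥ
            (Function.update e t (Function.update (e t) j 0) (t - ℓ)))
        = fun i => B h i j) ∧
    A ⟨0, hp⟩ = B h :=
  ⟨fun e hsum t j => (movingAverage_update_sub (fun ℓ => B (h + ℓ)) e t (hsum t) _ _).trans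
      (mulVec_update_one_sub_update_zero (B h) (e t) j),
    regression_coeff_zero_eq hp B hB0 A g hreg⟩

/-- impulse response identification: suppose `x_t = ∑_ℓ B_ℓ ε_{t−ℓ}` with
`B₀ = I`, and that the `h`-step regression representation
`x_{t+h} = A₁x_t + ⋯ + A_p x_{t−p+1} + u_{t,h}` holds, where `u_{t,h} = g(ε_{t+h},…,ε_{t+1})`
depends only on the future innovations.  The conditional mean of `x_{t+h}` given the
innovations up to time `t` is `∑_{ℓ≥0} B_{h+ℓ} ε_{t−ℓ}` (future innovations being mean
zero), so the impulse response `IR_{h,j}` — the difference of conditional means when the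
`j`-th coordinate of `ε_t` is set to `1` versus `0` — equals the `j`-th column of `B_h`;
moreover `A₁ = B_h`. -/
theorem stmt14 {N p h : ℕ} (hp : 0 < p) (hh : 1 ≤ h)
    (B : ℕ → Matrix (Fin N) (Fin N) ℝ) (hB0 : B 0 = 1)
    (A : Fin p → Matrix (Fin N) (Fin N) ℝ)
    (g : (Fin h → (Fin N → ℝ)) → (Fin N → ℝ))
    (hreg : ∀ e : ℤ → (Fin N → ℝ),
      (∀ t : ℤ, Summable (fun ℓ : ℕ => (B ℓ) *ᵥ e (t - ℓ))) →
      ∀ t : ℤ, (∑' ℓ : ℕ, (B ℓ) *ᵥ e (t + (h : ℤ) - ℓ))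
        = ∑ i : Fin p, (A i) *ᵥ (∑' ℓ : ℕ, (B ℓ) *ᵥ e (t - ((i : ℕ) : ℤ) - ℓ))
          + g (fun k => e (t + 1 + ((k : ℕ) : ℤ)))) :
    (∀ (e : ℤ → (Fin N → ℝ)),
      (∀ t : ℤ, Summable (fun ℓ : ℕ => (B (h + ℓ)) *ᵥ e (t - ℓ))) →
      ∀ (t : ℤ) (j : Fin N),
        (∑' ℓ : ℕ, (B (h + ℓ)) *ᵥ
            (Function.update e t (Function.update (e t) j 1) (t - ℓ)))
          - (∑' ℓ : ℕ, (B (h + ℓ)) *ᵥ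
            (Function.update e t (Function.update (e t) j 0) (t - ℓ)))
        = fun i => B h i j) ∧
    A ⟨0, hp⟩ = B h :=
  stmt14_general hp B hB0 A g hreg
end
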